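/- There exists a constant C > 0, depending only on γ, such that for all R > 0, ρ > 0 and u ∈ ℝ: |η^{ψ_R}(ρ, u)| ≤ C R ρ(|u| + ρ^θ) and |q^{ψ_R}(ρ, u)| ≤ C R ρ(|u| + ρ^θ)². -/

import Mathlib

open Real MeasureTheory

/-!
Since `0 ≤ h_R ≤ 1` vanishes outside `[−2R, 2R]`, every `ψ_R'(y) = ∫₀^y h_R` is bounded by `4R`,
so `|ψ_R(v)| ≤ 4R|v|`. For `|s| ≤ 1` the arguments satisfy `|u + ρ^θ s| ≤ |u| + ρ^θ` and
`|u + θρ^θ s| ≤ (θ + 1)(|u| + ρ^θ)`, so both integrands are bounded by multiples of the kernel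
`(1 − s²)^λ`, which is integrable on `[−1, 1]` because `λ > −1`.
-/

/-- `θ = (γ − 1)/2`. -/
noncomputable def thetaExp (γ : ℝ) : ℝ := (γ - 1) / 2

/-- `λ = (3 − γ)/(2(γ − 1))`. -/
noncomputable def lamExp (γ : ℝ) : ℝ := (3 - γ) / (2 * (γ - 1))

/-- The weak entropy of the isentropic Euler system with polytropic pressure, generated by `ψ`:
`η^ψ(ρ, u) = ρ ∫_{−1}^{1} ψ(u + ρ^θ s)(1 − s²)^λ ds`. -/
noncomputable def entropy (γ : ℝ) (ψ : ℝ → ℝ) (ρ u : ℝ) : ℝ :=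
  ρ * ∫ s in (-1:ℝ)..1, ψ (u + ρ ^ thetaExp γ * s) * (1 - s ^ 2) ^ lamExp γ

/-- The weak entropy flux generated by `ψ`:
`q^ψ(ρ, u) = ρ ∫_{−1}^{1} (u + θρ^θ s) ψ(u + ρ^θ s)(1 − s²)^λ ds`. -/
noncomputable def entropyFlux (γ : ℝ) (ψ : ℝ → ℝ) (ρ u : ℝ) : ℝ :=
  ρ * ∫ s in (-1:ℝ)..1,
    (u + thetaExp γ * ρ ^ thetaExp γ * s) * ψ (u + ρ ^ thetaExp γ * s) * (1 - s ^ 2) ^ lamExp γ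

/-- The truncated second derivative: `h_R(w) = 1` if `|w| ≤ R`, `(2R − |w|)/R` if
`R ≤ |w| ≤ 2R`, and `0` if `|w| ≥ 2R`. -/
noncomputable def hTrunc (R w : ℝ) : ℝ :=
  if |w| ≤ R then 1 else if |w| ≤ 2 * R then (2 * R - |w|) / R else 0

/-- The truncated quadratic generating function `ψ_R(s) = ∫₀^s ∫₀^y h_R(w) dw dy`. -/
noncomputable def psiR (R s : ℝ) : ℝ := ∫ y in (0:ℝ)..s, ∫ w in (0:ℝ)..y, hTrunc R w

open Set
open scoped Interval

theorem norm_intervalIntegral_le_of_support_subset_Icc {E : Type*} [NormedAddCommGroup E]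
    [NormedSpace ℝ E] {f : ℝ → E} {a b C : ℝ} (hab : a ≤ b) (hsupp : Function.support f ⊆ Icc a b)
    (hf : ∀ x, ‖f x‖ ≤ C) (c d : ℝ) : ‖∫ x in c..d, f x‖ ≤ C * (b - a) := by
  have hvanish : ∀ x ∈ Ι c d \ (Ι c d ∩ Icc a b), f x = 0 := fun x hx =>
    Function.notMem_support.mp fun h => hx.2 ⟨hx.1, hsupp h⟩
  rw [intervalIntegral.norm_integral_eq_norm_integral_uIoc,
    setIntegral_eq_of_subset_of_forall_sdiff_eq_zero measurableSet_uIoc inter_subset_left hvanish]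
  have hC : 0 ≤ C := (norm_nonneg _).trans (hf 0)
  calc ‖∫ x in Ι c d ∩ Icc a b, f x‖ ≤ C * volume.real (Ι c d ∩ Icc a b) :=
        norm_setIntegral_le_of_norm_le_const
          (measure_inter_lt_top_of_right_ne_top measure_Icc_lt_top.ne) fun x _ => hf x
    _ ≤ C * volume.real (Icc a b) :=
        mul_le_mul_of_nonneg_left (measureReal_mono inter_subset_right measure_Icc_lt_top.ne) hC
    _ = C * (b - a) := by rw [Real.volume_real_Icc_of_le hab]

theorem abs_intervalIntegral_mul_le {f w : ℝ → ℝ} {a b K : ℝ} (hab : a ≤ b)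
    (hw : IntervalIntegrable w volume a b) (hw0 : ∀ s ∈ Icc a b, 0 ≤ w s)
    (hf : ∀ s ∈ Icc a b, |f s| ≤ K) :
    |∫ s in a..b, f s * w s| ≤ K * ∫ s in a..b, w s := by
  rw [← intervalIntegral.integral_const_mul, ← Real.norm_eq_abs]
  refine intervalIntegral.norm_integral_le_of_norm_le hab (ae_of_all _ fun s hs => ?_)
    (hw.const_mul K)
  have hs' : s ∈ Icc a b := Ioc_subset_Icc_self hs
  rw [norm_mul, Real.norm_of_nonneg (hw0 s hs')]
  exact mul_le_mul_of_nonneg_right (hf s hs') (hw0 s hs')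

theorem abs_hTrunc_le_one {R : ℝ} (hR : 0 < R) (w : ℝ) : |hTrunc R w| ≤ 1 := by
  unfold hTrunc
  split_ifs with h₁ h₂
  · simp
  · rw [abs_le, le_div_iff₀ hR, div_le_one hR]
    constructor <;> linarith
  · simp

theorem support_hTrunc_subset (R : ℝ) : Function.support (hTrunc R) ⊆ Icc (-(2 * R)) (2 * R) := by
  intro w hw
  rw [mem_Icc, ← abs_le]
  by_contra h
  apply hw
  have := abs_nonneg w
  rw [hTrunc, if_neg (by linarith), if_neg h]

theorem abs_psiR_le {R : ℝ} (hR : 0 < R) (s : ℝ) : |psiR R s| ≤ 4 * R * |s| := by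
  have hinner : ∀ y, ‖∫ w in (0:ℝ)..y, hTrunc R w‖ ≤ 4 * R := fun y => by
    have := norm_intervalIntegral_le_of_support_subset_Icc (by linarith) (support_hTrunc_subset R)
      (abs_hTrunc_le_one hR) 0 y
    linarith
  simpa [psiR] using intervalIntegral.norm_integral_le_of_norm_le_const (a := 0) (b := s)
    fun y _ => hinner y

theorem one_sub_sq_rpow_nonneg {l s : ℝ} (hs : s ∈ Icc (-1:ℝ) 1) : 0 ≤ (1 - s ^ 2) ^ l :=
  rpow_nonneg (by nlinarith [hs.1, hs.2]) l

theorem one_sub_sq_rpow_le {l s : ℝ} (hs : s ∈ Icc (-1:ℝ) 1) :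
    (1 - s ^ 2) ^ l ≤ (1 - s) ^ l + (1 + s) ^ l + 1 := by
  have h₁ : 0 ≤ 1 - s := by linarith [hs.2]
  have h₂ : 0 ≤ 1 + s := by linarith [hs.1]
  have g₁ : 0 ≤ (1 - s) ^ l := rpow_nonneg h₁ l
  have g₂ : 0 ≤ (1 + s) ^ l := rpow_nonneg h₂ l
  rcases le_total 0 l with hl | hl
  · have : (1 - s ^ 2) ^ l ≤ 1 := rpow_le_one (by nlinarith) (by nlinarith) hl
    linarith
  rw [show 1 - s ^ 2 = (1 - s) * (1 + s) by ring, mul_rpow h₁ h₂]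
  rcases le_total 0 s with hs0 | hs0
  · have : (1 + s) ^ l ≤ 1 := rpow_le_one_of_one_le_of_nonpos (by linarith) hl
    nlinarith
  · have : (1 - s) ^ l ≤ 1 := rpow_le_one_of_one_le_of_nonpos (by linarith) hl
    nlinarith

theorem intervalIntegrable_one_sub_sq_rpow {l : ℝ} (hl : -1 < l) :
    IntervalIntegrable (fun s : ℝ => (1 - s ^ 2) ^ l) volume (-1) 1 := by
  have hrpow := intervalIntegral.intervalIntegrable_rpow' (a := 0) (b := 2) hl
  have hleft : IntervalIntegrable (fun s : ℝ => (1 - s) ^ l) volume (-1) 1 := by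
    convert (hrpow.comp_sub_left 1).symm using 1 <;> norm_num
  have hright : IntervalIntegrable (fun s : ℝ => (1 + s) ^ l) volume (-1) 1 := by
    convert hrpow.comp_add_left 1 using 1 <;> norm_num
  refine IntervalIntegrable.mono_fun' ((hleft.add hright).add (intervalIntegrable_const (c := 1)))
    ((measurable_const.sub (measurable_id.pow_const 2)).pow_const l).aestronglyMeasurable ?_
  rw [uIoc_of_le (by norm_num)]
  filter_upwards [ae_restrict_mem measurableSet_Ioc] with s hs
  have hs' := Ioc_subset_Icc_self hs
  rw [Real.norm_of_nonneg (one_sub_sq_rpow_nonneg hs')]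
  exact one_sub_sq_rpow_le hs'

theorem abs_add_mul_le {u c s : ℝ} (hc : 0 ≤ c) (hs : s ∈ Icc (-1:ℝ) 1) :
    |u + c * s| ≤ |u| + c := by
  calc |u + c * s| ≤ |u| + |c * s| := abs_add_le _ _
    _ = |u| + c * |s| := by rw [abs_mul, abs_of_nonneg hc]
    _ ≤ |u| + c := by gcongr; exact mul_le_of_le_one_right hc (abs_le.mpr hs)

theorem abs_apply_add_mul_le {ψ : ℝ → ℝ} {L u c s : ℝ} (hψ : ∀ v, |ψ v| ≤ L * |v|) (hc : 0 ≤ c)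
    (hs : s ∈ Icc (-1:ℝ) 1) : |ψ (u + c * s)| ≤ L * (|u| + c) := by
  have hL : 0 ≤ L := by simpa using (abs_nonneg _).trans (hψ 1)
  exact (hψ _).trans (mul_le_mul_of_nonneg_left (abs_add_mul_le hc hs) hL)

section Entropy

variable {γ : ℝ}

theorem thetaExp_pos (hγ : 1 < γ) : 0 < thetaExp γ := by
  unfold thetaExp; linarith

theorem neg_one_lt_lamExp (hγ : 1 < γ) : -1 < lamExp γ := by
  unfold lamExp
  rw [lt_div_iff₀ (by linarith)]
  linarith

noncomputable def weightMass (γ : ℝ) : ℝ := ∫ s in (-1:ℝ)..1, (1 - s ^ 2) ^ lamExp γ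

theorem weightMass_nonneg (γ : ℝ) : 0 ≤ weightMass γ :=
  intervalIntegral.integral_nonneg (by norm_num) fun _ hs => one_sub_sq_rpow_nonneg hs

variable {ψ : ℝ → ℝ} {L ρ : ℝ}

theorem abs_entropy_le (hγ : 1 < γ) (hψ : ∀ v, |ψ v| ≤ L * |v|) (hρ : 0 ≤ ρ) (u : ℝ) :
    |entropy γ ψ ρ u| ≤ L * weightMass γ * ρ * (|u| + ρ ^ thetaExp γ) := by
  have hintegrand : ∀ s ∈ Icc (-1:ℝ) 1,
      |ψ (u + ρ ^ thetaExp γ * s)| ≤ L * (|u| + ρ ^ thetaExp γ) := fun _ hs =>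
    abs_apply_add_mul_le hψ (rpow_nonneg hρ _) hs
  have hintegral := abs_intervalIntegral_mul_le (by norm_num)
    (intervalIntegrable_one_sub_sq_rpow (neg_one_lt_lamExp hγ))
    (fun _ hs => one_sub_sq_rpow_nonneg hs) hintegrand
  rw [entropy, abs_mul, abs_of_nonneg hρ]
  calc ρ * |∫ s in (-1:ℝ)..1, ψ (u + ρ ^ thetaExp γ * s) * (1 - s ^ 2) ^ lamExp γ|
      ≤ ρ * (L * (|u| + ρ ^ thetaExp γ) * weightMass γ) :=
        mul_le_mul_of_nonneg_left hintegral hρ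
    _ = L * weightMass γ * ρ * (|u| + ρ ^ thetaExp γ) := by ring

theorem abs_entropyFlux_le (hγ : 1 < γ) (hψ : ∀ v, |ψ v| ≤ L * |v|) (hρ : 0 ≤ ρ) (u : ℝ) :
    |entropyFlux γ ψ ρ u| ≤
      L * (thetaExp γ + 1) * weightMass γ * ρ * (|u| + ρ ^ thetaExp γ) ^ 2 := by
  set θ := thetaExp γ
  set M := |u| + ρ ^ θ
  have hθ := (thetaExp_pos hγ).le
  have hψM : ∀ s ∈ Icc (-1:ℝ) 1, |ψ (u + ρ ^ θ * s)| ≤ L * M := fun _ hs =>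
    abs_apply_add_mul_le hψ (rpow_nonneg hρ _) hs
  have hspeed : ∀ s ∈ Icc (-1:ℝ) 1, |u + θ * ρ ^ θ * s| ≤ (θ + 1) * M := fun s hs => by
    have := abs_add_mul_le (u := u) (mul_nonneg hθ (rpow_nonneg hρ θ)) hs
    nlinarith [mul_nonneg hθ (abs_nonneg u), rpow_nonneg hρ θ]
  have hintegrand : ∀ s ∈ Icc (-1:ℝ) 1,
      |(u + θ * ρ ^ θ * s) * ψ (u + ρ ^ θ * s)| ≤ (θ + 1) * M * (L * M) := fun s hs => by
    rw [abs_mul]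
    exact mul_le_mul (hspeed s hs) (hψM s hs) (abs_nonneg _)
      (mul_nonneg (by linarith) (by positivity))
  have hintegral := abs_intervalIntegral_mul_le (by norm_num)
    (intervalIntegrable_one_sub_sq_rpow (neg_one_lt_lamExp hγ))
    (fun _ hs => one_sub_sq_rpow_nonneg hs) hintegrand
  rw [entropyFlux, abs_mul, abs_of_nonneg hρ]
  calc ρ * |∫ s in (-1:ℝ)..1, (u + θ * ρ ^ θ * s) * ψ (u + ρ ^ θ * s) * (1 - s ^ 2) ^ lamExp γ|
      ≤ ρ * ((θ + 1) * M * (L * M) * weightMass γ) :=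
        mul_le_mul_of_nonneg_left hintegral hρ
    _ = L * (θ + 1) * weightMass γ * ρ * M ^ 2 := by ring

end Entropy

/-- There is a constant `C > 0`, depending only on `γ`, such that for all `R > 0`, `ρ > 0`
and `u ∈ ℝ`: `|η^{ψ_R}(ρ,u)| ≤ C R ρ(|u| + ρ^θ)` and `|q^{ψ_R}(ρ,u)| ≤ C R ρ(|u| + ρ^θ)²`. -/
theorem entropy_psiR_bounds (γ : ℝ) (hγ : 1 < γ) :
    ∃ C : ℝ, 0 < C ∧ ∀ R : ℝ, 0 < R → ∀ ρ : ℝ, 0 < ρ → ∀ u : ℝ,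
      |entropy γ (psiR R) ρ u| ≤ C * R * ρ * (|u| + ρ ^ thetaExp γ) ∧
      |entropyFlux γ (psiR R) ρ u| ≤ C * R * ρ * (|u| + ρ ^ thetaExp γ) ^ 2 := by
  set θ := thetaExp γ
  set W := weightMass γ
  have hθ : 0 < θ := thetaExp_pos hγ
  have hW : 0 ≤ W := weightMass_nonneg γ
  refine ⟨4 * (θ + 1) * (W + 1), by positivity, fun R hR ρ hρ u => ?_⟩
  have hψ := abs_psiR_le hR
  have hM : 0 ≤ |u| + ρ ^ θ := by positivity
  have hRρ : 0 ≤ R * ρ := by positivity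
  constructor
  · refine (abs_entropy_le hγ hψ hρ.le u).trans ?_
    nlinarith [mul_nonneg (mul_nonneg hRρ hM) (by positivity : 0 ≤ θ * W + θ + 1)]
  · refine (abs_entropyFlux_le hγ hψ hρ.le u).trans ?_
    nlinarith [mul_nonneg (mul_nonneg hRρ (sq_nonneg (|u| + ρ ^ θ))) (by positivity : 0 ≤ θ + 1)]
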